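/- For the Vilenkin system on a bounded Vilenkin group with R = sup_k m_k, the Fejér kernels satisfy ∫_{G_m} K_n dμ = 1 and sup_n ∫_{G_m} |K_n| dμ ≤ R⁵. -/

import Mathlib

noncomputable section
open MeasureTheory Finset Filter

namespace VilPaper

instance (n : ℕ) : TopologicalSpace (ZMod n) := ⊥
instance (n : ℕ) : DiscreteTopology (ZMod n) := ⟨rfl⟩

variable (m : ℕ → ℕ)

abbrev mseq (k : ℕ) : ℕ := m k + 2
abbrev G := ∀ k, ZMod (mseq m k)

instance : IsTopologicalAddGroup (G m) := by infer_instance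
instance : CompactSpace (G m) := by infer_instance
instance : MeasurableSpace (G m) := borel _
instance : BorelSpace (G m) := ⟨rfl⟩

def μV : Measure (G m) := Measure.addHaarMeasure ⊤

/-- The generalized number system: `M_0 = 1`, `M_{k+1} = m_k M_k`. -/
def Mgen : ℕ → ℕ
  | 0 => 1
  | k + 1 => mseq m k * Mgen k

/-- The cylinder sets `I_n(x)`. -/
def cyl (n : ℕ) (x : G m) : Set (G m) := {y | ∀ i < n, y i = x i}

/-- `I_n := I_n(0)`. -/
def Icyl (n : ℕ) : Set (G m) := cyl m n 0

/-- Generalized Rademacher functions `r_k(x) = exp(2πi x_k / m_k)`. -/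
def rad (k : ℕ) (x : G m) : ℂ :=
  Complex.exp (2 * Real.pi * Complex.I * ((x k).val : ℂ) / (mseq m k : ℂ))

/-- The `j`-th digit `n_j` of `n` in the number system `(M_k)`. -/
def digit (n j : ℕ) : ℕ := n / Mgen m j % mseq m j

/-- `|n| = max { j : n_j ≠ 0 }`. -/
def ndeg (n : ℕ) : ℕ := sSup {j | digit m n j ≠ 0}

/-- The Vilenkin system `ψ_n = ∏ r_k^{n_k}`. -/
def psi (n : ℕ) (x : G m) : ℂ := ∏ k ∈ Finset.range (n + 1), rad m k x ^ digit m n k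

/-- Dirichlet kernels `D_n = ∑_{k<n} ψ_k`. -/
def Dker (n : ℕ) (x : G m) : ℂ := ∑ k ∈ Finset.range n, psi m k x

/-- Fejér kernels `K_n = (1/n) ∑_{k=1}^n D_k`. -/
def Kker (n : ℕ) (x : G m) : ℂ := (n : ℂ)⁻¹ * ∑ k ∈ Finset.range n, Dker m (k + 1) x

/-- Vilenkin–Fourier coefficients. -/
def fcoef (f : G m → ℂ) (k : ℕ) : ℂ := ∫ x, f x * (starRingEnd ℂ) (psi m k x) ∂ μV m

/-- Partial sums `S_n f` of the Vilenkin–Fourier series. -/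
def partialSum (f : G m → ℂ) (n : ℕ) (x : G m) : ℂ :=
  ∑ k ∈ Finset.range n, fcoef m f k * psi m k x

/-- Fejér means `σ_n f = (1/n) ∑_{k=1}^n S_k f`. -/
def fejer (f : G m → ℂ) (n : ℕ) (x : G m) : ℂ :=
  (n : ℂ)⁻¹ * ∑ k ∈ Finset.range n, partialSum m f (k + 1) x

/-- `Q_n = ∑_{k<n} q_k`. -/
def Qsum (q : ℕ → ℝ) (n : ℕ) : ℝ := ∑ k ∈ Finset.range n, q k

/-- The `T` means `T_n f = (1/Q_n) ∑_{k<n} q_k S_k f`. -/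
def Tmean (q : ℕ → ℝ) (f : G m → ℂ) (n : ℕ) (x : G m) : ℂ :=
  (Qsum q n : ℂ)⁻¹ * ∑ k ∈ Finset.range n, (q k : ℂ) * partialSum m f k x

/-- Convolution on `G_m`. -/
def conv (f g : G m → ℂ) (x : G m) : ℂ := ∫ t, f t * g (x - t) ∂ μV m

/-- The modulus of continuity `ω_p(δ, f) = sup_{t ∈ I_s, 1/M_s < δ} ‖f(·-t) - f‖_p`. -/
def omega (p : ENNReal) (f : G m → ℂ) (δ : ℝ) : ENNReal :=
  ⨆ (s : ℕ) (_ : (1 : ℝ) / (Mgen m s : ℝ) < δ) (t : G m) (_ : t ∈ Icyl m s),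
    eLpNorm (fun x => f (x - t) - f x) p (μV m)

/-- The Lipschitz class `Lip(α, p)`. -/
def LipClass (p : ENNReal) (α : ℝ) (f : G m → ℂ) : Prop :=
  MemLp f p (μV m) ∧ ∃ C : ℝ, ∀ δ : ℝ, 0 < δ → omega m p f δ ≤ ENNReal.ofReal (C * δ ^ α)

/-! Translating by the unit vector `e_s = Pi.single s 1` multiplies `r_s^p` by the nontrivial root
of unity `exp (2πi p / m_s)` (for `0 < p < m_s`) and fixes every function of the first `s`
coordinates, so `∫ r_s^p g = 0` for such `g`. Writing `n = p M_s + j` with `0 < p < m_s`,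
`j < M_s` gives `ψ_n = r_s^p ψ_j`, whence `∫ ψ_n = 0` for `n ≥ 1` and `∫ K_n = 1`.

The same computation shows that multiplying such a `g` by `∑_{l < m_s} r_s^l = m_s 1_{x_s = 0}`
does not change `‖g‖₁`. With `D_{p M_s} = (∑_{l < p} r_s^l) D_{M_s}` this gives `‖D_{M_s}‖₁ = 1`,
then `‖M_s K_{M_s}‖₁ ≤ R M_s` by induction on `s`, and finally `‖n K_n‖₁ ≤ 2 R n` by strong
induction on `n`, splitting `∑_{k ≤ p M_s + j} D_k` along `D_{p M_s + i} = D_{p M_s} + r_s^p D_i`.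
Hence `‖K_n‖₁ ≤ 2 R ≤ R⁵`. -/

open Function

section Integrals

theorem integral_eq_zero_of_add_right_eq_mul {H : Type*} [AddGroup H] [MeasurableSpace H]
    [MeasurableAdd H] {μ : Measure H} [μ.IsAddRightInvariant] {f : H → ℂ} {t : H} {c : ℂ}
    (hf : ∀ x, f (x + t) = c * f x) (hc : c ≠ 1) : ∫ x, f x ∂μ = 0 := by
  have h : ∫ x, f x ∂μ = c * ∫ x, f x ∂μ := by
    rw [← integral_const_mul, ← integral_add_right_eq_self f t]
    simp_rw [hf]
  have : (1 - c) * ∫ x, f x ∂μ = 0 := by rw [sub_mul, one_mul, ← h, sub_self]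
  exact (mul_eq_zero.1 this).resolve_left (sub_ne_zero.2 hc.symm)

theorem integral_norm_add_le {α E : Type*} [MeasurableSpace α] {μ : Measure α}
    [NormedAddCommGroup E] {f g : α → E} (hf : Integrable f μ) (hg : Integrable g μ) :
    ∫ x, ‖f x + g x‖ ∂μ ≤ ∫ x, ‖f x‖ ∂μ + ∫ x, ‖g x‖ ∂μ := by
  rw [← integral_add hf.norm hg.norm]
  exact integral_mono_of_nonneg (.of_forall fun _ => norm_nonneg _) (hf.norm.add hg.norm)
    (.of_forall fun _ => norm_add_le _ _)

theorem integral_norm_mul_le_of_norm_le {α E : Type*} [MeasurableSpace α] {μ : Measure α}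
    [NormedRing E] {f g : α → E} {B : ℝ} (hf : Integrable f μ) (hg : ∀ x, ‖g x‖ ≤ B) :
    ∫ x, ‖g x * f x‖ ∂μ ≤ B * ∫ x, ‖f x‖ ∂μ := by
  rw [← integral_const_mul]
  exact integral_mono_of_nonneg (.of_forall fun _ => norm_nonneg _) (hf.norm.const_mul B)
    (.of_forall fun x => (norm_mul_le _ _).trans
      (mul_le_mul_of_nonneg_right (hg x) (norm_nonneg _)))

end Integrals

variable {m}

section NumberSystem

lemma mseq_pos (k : ℕ) : 0 < mseq m k := Nat.succ_pos _

lemma Mgen_succ (s : ℕ) : Mgen m (s + 1) = mseq m s * Mgen m s := rfl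

lemma Mgen_pos (s : ℕ) : 0 < Mgen m s := by
  induction s with
  | zero => exact Nat.one_pos
  | succ s ih => exact Nat.mul_pos (mseq_pos s) ih

lemma Mgen_le_Mgen_succ (s : ℕ) : Mgen m s ≤ Mgen m (s + 1) :=
  Nat.le_mul_of_pos_left _ (mseq_pos s)

lemma Mgen_mono : Monotone (Mgen m) := monotone_nat_of_le_succ Mgen_le_Mgen_succ

lemma lt_Mgen (s : ℕ) : s < Mgen m s := by
  induction s with
  | zero => exact Nat.one_pos
  | succ s ih =>
    have : 2 * Mgen m s ≤ Mgen m (s + 1) := Nat.mul_le_mul_right _ (Nat.le_add_left 2 (m s))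
    omega

lemma Mgen_dvd {i j : ℕ} (h : i ≤ j) : Mgen m i ∣ Mgen m j := by
  induction j, h using Nat.le_induction with
  | base => exact dvd_rfl
  | succ j _ ih => exact ih.mul_left _

lemma mul_Mgen_add_lt {p s j : ℕ} (hp : p < mseq m s) (hj : j < Mgen m s) :
    p * Mgen m s + j < Mgen m (s + 1) :=
  calc p * Mgen m s + j < (p + 1) * Mgen m s := by rw [add_one_mul]; omega
    _ ≤ Mgen m (s + 1) := Nat.mul_le_mul_right _ hp

lemma digit_eq_zero_of_lt {n j : ℕ} (h : n < Mgen m j) : digit m n j = 0 := by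
  simp [digit, Nat.div_eq_of_lt h]

lemma digit_mul_Mgen_add_of_lt {p s j i : ℕ} (hi : i < s) :
    digit m (p * Mgen m s + j) i = digit m j i := by
  obtain ⟨t, ht⟩ := Mgen_dvd (m := m) (Nat.succ_le_of_lt hi)
  rw [Mgen_succ] at ht
  rw [digit, digit, ht, show p * (mseq m i * Mgen m i * t) + j = j + p * t * mseq m i * Mgen m i by
    ring, Nat.add_mul_div_right _ _ (Mgen_pos i), Nat.add_mul_mod_self_right]

lemma digit_mul_Mgen_add_self {p s j : ℕ} (hp : p < mseq m s) (hj : j < Mgen m s) :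
    digit m (p * Mgen m s + j) s = p := by
  rw [digit, add_comm, Nat.add_mul_div_right _ _ (Mgen_pos s), Nat.div_eq_of_lt hj, zero_add,
    Nat.mod_eq_of_lt hp]

lemma exists_eq_mul_Mgen_add {n : ℕ} (hn : 1 ≤ n) :
    ∃ s p j, 0 < p ∧ p < mseq m s ∧ j < Mgen m s ∧ n = p * Mgen m s + j := by
  have hex : ∃ s, n < Mgen m (s + 1) := ⟨n, (lt_Mgen n).trans_le (Mgen_le_Mgen_succ n)⟩
  set s := Nat.find hex
  have hlt : n < mseq m s * Mgen m s := Nat.find_spec hex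
  have hle : Mgen m s ≤ n := by
    rcases Nat.eq_zero_or_pos s with hs | hs
    · rw [hs]; exact hn
    · have h := Nat.find_min hex (Nat.sub_lt hs one_pos)
      rwa [show s - 1 + 1 = s by omega, not_lt] at h
  refine ⟨s, n / Mgen m s, n % Mgen m s, Nat.div_pos hle (Mgen_pos s),
    (Nat.div_lt_iff_lt_mul (Mgen_pos s)).2 hlt, Nat.mod_lt _ (Mgen_pos s), ?_⟩
  rw [mul_comm, Nat.div_add_mod]

end NumberSystem

section Characters

lemma rad_eq_stdAddChar (k : ℕ) (x : G m) : rad m k x = ZMod.stdAddChar (x k) := by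
  rw [ZMod.stdAddChar_apply, ZMod.toCircle_apply]; rfl

lemma norm_rad (k : ℕ) (x : G m) : ‖rad m k x‖ = 1 := by
  rw [rad_eq_stdAddChar, ZMod.stdAddChar_apply, Circle.norm_coe]

lemma rad_add (k : ℕ) (x y : G m) : rad m k (x + y) = rad m k x * rad m k y := by
  simp only [rad_eq_stdAddChar, Pi.add_apply, AddChar.map_add_eq_mul]

@[fun_prop]
lemma continuous_rad (k : ℕ) : Continuous (rad m k) := by
  simp only [funext (rad_eq_stdAddChar k)]
  exact continuous_of_discreteTopology.comp (continuous_apply k)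

lemma prod_rad_pow_digit_eq {n N N' : ℕ} (hn : n < Mgen m N) (h : N ≤ N') (x : G m) :
    ∏ i ∈ range N', rad m i x ^ digit m n i = ∏ i ∈ range N, rad m i x ^ digit m n i := by
  refine (prod_subset (range_subset_range.2 h) fun i _ hi => ?_).symm
  rw [digit_eq_zero_of_lt (hn.trans_le (Mgen_mono (not_lt.1 (mem_range.not.1 hi)))), pow_zero]

lemma psi_eq_prod {n N : ℕ} (hn : n < Mgen m N) (x : G m) :
    psi m n x = ∏ i ∈ range N, rad m i x ^ digit m n i := by
  rw [psi, ← prod_rad_pow_digit_eq ((Nat.lt_succ_self n).trans (lt_Mgen _)) (le_max_left _ N),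
    prod_rad_pow_digit_eq hn (le_max_right _ _)]

lemma psi_zero (x : G m) : psi m 0 x = 1 := by
  simp [psi, digit]

@[fun_prop]
lemma continuous_psi (n : ℕ) : Continuous (psi m n) := by
  unfold psi; fun_prop

lemma psi_mul_Mgen_add {p s j : ℕ} (hp : p < mseq m s) (hj : j < Mgen m s) (x : G m) :
    psi m (p * Mgen m s + j) x = rad m s x ^ p * psi m j x := by
  rw [psi_eq_prod (mul_Mgen_add_lt hp hj), psi_eq_prod hj, prod_range_succ,
    digit_mul_Mgen_add_self hp hj, mul_comm]
  congr 1
  exact prod_congr rfl fun i hi => by rw [digit_mul_Mgen_add_of_lt (mem_range.1 hi)]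

@[fun_prop]
lemma continuous_Dker (n : ℕ) : Continuous (Dker m n) := by
  unfold Dker; fun_prop

lemma rad_add_single_self (s : ℕ) (x : G m) :
    rad m s (x + Pi.single s 1) = ZMod.stdAddChar (N := mseq m s) 1 * rad m s x := by
  rw [rad_add, mul_comm, rad_eq_stdAddChar s (Pi.single s 1), Pi.single_eq_same]

lemma periodic_rad {i s : ℕ} (h : i ≠ s) : Periodic (rad m i) (Pi.single s 1) := by
  intro x
  rw [rad_add, rad_eq_stdAddChar i (Pi.single s 1), Pi.single_eq_of_ne h, AddChar.map_zero_eq_one,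
    mul_one]

lemma periodic_psi {n s : ℕ} (hn : n < Mgen m s) : Periodic (psi m n) (Pi.single s 1) := by
  intro x
  simp only [psi_eq_prod hn]
  exact prod_congr rfl fun i hi => by rw [periodic_rad (mem_range.1 hi).ne]

lemma periodic_Dker {n s : ℕ} (hn : n ≤ Mgen m s) : Periodic (Dker m n) (Pi.single s 1) := by
  intro x
  exact sum_congr rfl fun k hk => periodic_psi ((mem_range.1 hk).trans_le hn) x

end Characters

section HaarMeasure

instance : (μV m).IsAddLeftInvariant := by unfold μV; infer_instance

instance : IsProbabilityMeasure (μV m) := by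
  constructor
  rw [← TopologicalSpace.PositiveCompacts.coe_top]
  exact Measure.addHaarMeasure_self

lemma integrable_of_continuous {E : Type*} [NormedAddCommGroup E] {f : G m → E}
    (hf : Continuous f) : Integrable f (μV m) :=
  hf.integrable_of_hasCompactSupport (.of_compactSpace f)

end HaarMeasure

section Orthogonality

lemma integral_rad_pow_mul_eq_zero {s p : ℕ} {g : G m → ℂ} (hg : Periodic g (Pi.single s 1))
    (hp₀ : 0 < p) (hp : p < mseq m s) : ∫ x, rad m s x ^ p * g x ∂μV m = 0 := by
  refine integral_eq_zero_of_add_right_eq_mul (c := ZMod.stdAddChar (N := mseq m s) 1 ^ p)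
    (fun x => by rw [rad_add_single_self, hg, mul_pow, mul_assoc]) ?_
  rw [← AddChar.map_nsmul_eq_pow, nsmul_one,
    ← AddChar.map_zero_eq_one (ZMod.stdAddChar (N := mseq m s)),
    (ZMod.injective_stdAddChar (N := mseq m s)).ne_iff, Ne, ZMod.natCast_eq_zero_iff]
  exact Nat.not_dvd_of_pos_of_lt hp₀ hp

lemma integral_geomSum_rad_mul {s q : ℕ} {g : G m → ℂ} (hg : Periodic g (Pi.single s 1))
    (hgc : Continuous g) (hq₀ : 0 < q) (hq : q ≤ mseq m s) :
    ∫ x, (∑ l ∈ range q, rad m s x ^ l) * g x ∂μV m = ∫ x, g x ∂μV m := by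
  simp_rw [sum_mul]
  rw [integral_finsetSum _ fun l _ => integrable_of_continuous (by fun_prop),
    sum_eq_single_of_mem 0 (mem_range.2 hq₀) fun l hl hl₀ =>
      integral_rad_pow_mul_eq_zero hg (Nat.pos_of_ne_zero hl₀) ((mem_range.1 hl).trans_le hq)]
  simp

lemma integral_psi {n : ℕ} (hn : 1 ≤ n) : ∫ x, psi m n x ∂μV m = 0 := by
  obtain ⟨s, p, j, hp₀, hp, hj, rfl⟩ := exists_eq_mul_Mgen_add (m := m) hn
  simp_rw [psi_mul_Mgen_add hp hj]
  exact integral_rad_pow_mul_eq_zero (periodic_psi hj) hp₀ hp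

lemma integral_Dker {n : ℕ} (hn : 1 ≤ n) : ∫ x, Dker m n x ∂μV m = 1 := by
  unfold Dker
  rw [integral_finsetSum _ fun k _ => integrable_of_continuous (continuous_psi k),
    sum_eq_single_of_mem 0 (mem_range.2 hn) fun k _ hk =>
      integral_psi (Nat.one_le_iff_ne_zero.2 hk)]
  simp [psi_zero]

lemma integral_Kker {n : ℕ} (hn : 1 ≤ n) : ∫ x, Kker m n x ∂μV m = 1 := by
  unfold Kker
  rw [integral_const_mul, integral_finsetSum _ fun k _ => integrable_of_continuous
    (continuous_Dker _), sum_congr rfl fun k _ => integral_Dker k.succ_pos]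
  simp [Nat.one_le_iff_ne_zero.1 hn]

end Orthogonality

section L1Norm

lemma norm_geomSum_rad_le (s q : ℕ) (x : G m) : ‖∑ l ∈ range q, rad m s x ^ l‖ ≤ q :=
  (norm_sum_le _ _).trans (by simp [norm_rad])

lemma norm_geomSum_geomSum_rad_le (s q : ℕ) (x : G m) :
    ‖∑ p ∈ range q, ∑ l ∈ range p, rad m s x ^ l‖ ≤ q * (q - 1) :=
  calc _ ≤ ∑ p ∈ range q, ((q : ℝ) - 1) :=
        (norm_sum_le _ _).trans <| sum_le_sum fun p hp => (norm_geomSum_rad_le s p x).trans <| by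
          have : p + 1 ≤ q := mem_range.1 hp
          rw [le_sub_iff_add_le]; exact_mod_cast this
    _ = q * (q - 1) := by rw [sum_const, card_range, nsmul_eq_mul]

lemma ofReal_norm_geomSum_rad (s : ℕ) (x : G m) :
    ((‖∑ l ∈ range (mseq m s), rad m s x ^ l‖ : ℝ) : ℂ)
      = ∑ l ∈ range (mseq m s), rad m s x ^ l := by
  by_cases h : rad m s x = 1
  · simp only [h, one_pow, sum_const, card_range, nsmul_eq_mul, mul_one, Complex.norm_natCast,
      Complex.ofReal_natCast]
  · have hpow : rad m s x ^ mseq m s = 1 := by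
      rw [rad_eq_stdAddChar, ← AddChar.map_nsmul_eq_pow, nsmul_eq_mul, ZMod.natCast_self,
        zero_mul, AddChar.map_zero_eq_one]
    rw [geom_sum_eq h, hpow]
    simp

lemma integral_norm_geomSum_rad_mul {s : ℕ} {g : G m → ℂ}
    (hg : Periodic g (Pi.single s 1)) (hgc : Continuous g) :
    ∫ x, ‖(∑ l ∈ range (mseq m s), rad m s x ^ l) * g x‖ ∂μV m
      = ∫ x, ‖g x‖ ∂μV m := by
  apply Complex.ofReal_injective
  rw [← integral_complex_ofReal, ← integral_complex_ofReal]
  simp_rw [norm_mul, Complex.ofReal_mul, ofReal_norm_geomSum_rad]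
  exact integral_geomSum_rad_mul (fun x => by rw [hg x]) (by fun_prop) (mseq_pos s) le_rfl

lemma Dker_mul_Mgen_add {p s j : ℕ} (hp : p < mseq m s) (hj : j ≤ Mgen m s) (x : G m) :
    Dker m (p * Mgen m s + j) x = Dker m (p * Mgen m s) x + rad m s x ^ p * Dker m j x := by
  unfold Dker
  rw [sum_range_add, mul_sum]
  exact congrArg _ (sum_congr rfl fun i hi => psi_mul_Mgen_add hp ((mem_range.1 hi).trans_le hj) x)

lemma Dker_mul_Mgen {p s : ℕ} (hp : p ≤ mseq m s) (x : G m) :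
    Dker m (p * Mgen m s) x = (∑ l ∈ range p, rad m s x ^ l) * Dker m (Mgen m s) x := by
  induction p with
  | zero => simp [Dker]
  | succ p ih =>
    rw [add_one_mul, Dker_mul_Mgen_add (by omega) le_rfl, ih (by omega), sum_range_succ]
    ring

lemma integral_norm_Dker_Mgen (s : ℕ) : ∫ x, ‖Dker m (Mgen m s) x‖ ∂μV m = 1 := by
  induction s with
  | zero => simp [Mgen, Dker, psi_zero]
  | succ s ih =>
    simp_rw [Mgen_succ, Dker_mul_Mgen le_rfl]
    rw [integral_norm_geomSum_rad_mul (periodic_Dker le_rfl) (continuous_Dker _), ih]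

lemma integral_norm_Dker_mul_Mgen_le {p s : ℕ} (hp : p ≤ mseq m s) :
    ∫ x, ‖Dker m (p * Mgen m s) x‖ ∂μV m ≤ p := by
  simp_rw [Dker_mul_Mgen hp]
  calc _ ≤ p * ∫ x, ‖Dker m (Mgen m s) x‖ ∂μV m :=
        integral_norm_mul_le_of_norm_le (integrable_of_continuous (continuous_Dker _))
          (norm_geomSum_rad_le s p)
    _ = p := by rw [integral_norm_Dker_Mgen, mul_one]

end L1Norm

section FejerKernel

def DkerSum (m : ℕ → ℕ) (n : ℕ) (x : G m) : ℂ := ∑ k ∈ range n, Dker m (k + 1) x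

lemma Kker_eq_inv_mul_DkerSum (n : ℕ) (x : G m) :
    Kker m n x = (n : ℂ)⁻¹ * DkerSum m n x := rfl

@[fun_prop]
lemma continuous_DkerSum (n : ℕ) : Continuous (DkerSum m n) := by
  unfold DkerSum; fun_prop

lemma periodic_DkerSum {n s : ℕ} (hn : n ≤ Mgen m s) :
    Periodic (DkerSum m n) (Pi.single s 1) := fun x =>
  sum_congr rfl fun _ hk => periodic_Dker (Nat.succ_le_of_lt ((mem_range.1 hk).trans_le hn)) x

lemma DkerSum_mul_Mgen_add {p s j : ℕ} (hp : p < mseq m s) (hj : j ≤ Mgen m s) (x : G m) :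
    DkerSum m (p * Mgen m s + j) x
      = DkerSum m (p * Mgen m s) x + j * Dker m (p * Mgen m s) x
        + rad m s x ^ p * DkerSum m j x := by
  have hshift : ∀ i ∈ range j, Dker m (p * Mgen m s + i + 1) x
      = Dker m (p * Mgen m s) x + rad m s x ^ p * Dker m (i + 1) x :=
    fun i hi => Dker_mul_Mgen_add hp (Nat.succ_le_of_lt ((mem_range.1 hi).trans_le hj)) x
  unfold DkerSum
  rw [sum_range_add, sum_congr rfl hshift, sum_add_distrib, sum_const, card_range, nsmul_eq_mul,
    ← mul_sum, add_assoc]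

lemma DkerSum_mul_Mgen {q s : ℕ} (hq : q ≤ mseq m s) (x : G m) :
    DkerSum m (q * Mgen m s) x
      = Mgen m s * ((∑ p ∈ range q, ∑ l ∈ range p, rad m s x ^ l) * Dker m (Mgen m s) x)
        + (∑ p ∈ range q, rad m s x ^ p) * DkerSum m (Mgen m s) x := by
  induction q with
  | zero => simp [DkerSum]
  | succ q ih =>
    rw [add_one_mul, DkerSum_mul_Mgen_add (by omega) le_rfl, ih (by omega),
      Dker_mul_Mgen (by omega), sum_range_succ, sum_range_succ]
    ring

lemma integral_norm_Mgen_mul_geomSum_geomSum_mul_Dker_le (s q : ℕ) :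
    ∫ x, ‖(Mgen m s : ℂ)
        * ((∑ p ∈ range q, ∑ l ∈ range p, rad m s x ^ l) * Dker m (Mgen m s) x)‖ ∂μV m
      ≤ Mgen m s * (q * (q - 1)) := by
  simp_rw [norm_mul (Mgen m s : ℂ), Complex.norm_natCast]
  rw [integral_const_mul]
  gcongr
  calc _ ≤ q * (q - 1) * ∫ x, ‖Dker m (Mgen m s) x‖ ∂μV m :=
        integral_norm_mul_le_of_norm_le (integrable_of_continuous (continuous_Dker _))
          (norm_geomSum_geomSum_rad_le s q)
    _ = q * (q - 1) := by rw [integral_norm_Dker_Mgen, mul_one]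

variable {R : ℕ} (hR : ∀ k, mseq m k ≤ R)
include hR

lemma integral_norm_DkerSum_Mgen_le (s : ℕ) :
    ∫ x, ‖DkerSum m (Mgen m s) x‖ ∂μV m ≤ R * Mgen m s := by
  induction s with
  | zero =>
    have : (1 : ℝ) ≤ R := by exact_mod_cast (mseq_pos 0).trans_le (hR 0)
    simpa [Mgen, DkerSum, Dker, psi_zero] using this
  | succ s ih =>
    simp_rw [Mgen_succ, DkerSum_mul_Mgen le_rfl]
    have hm : (mseq m s : ℝ) ≤ R := by exact_mod_cast hR s
    have hm₁ : (1 : ℝ) ≤ mseq m s := by exact_mod_cast mseq_pos s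
    calc _ ≤ Mgen m s * (mseq m s * (mseq m s - 1))
          + ∫ x, ‖DkerSum m (Mgen m s) x‖ ∂μV m := by
          refine (integral_norm_add_le (integrable_of_continuous (by fun_prop))
            (integrable_of_continuous (by fun_prop))).trans (add_le_add
              (integral_norm_Mgen_mul_geomSum_geomSum_mul_Dker_le s _) ?_)
          rw [integral_norm_geomSum_rad_mul (periodic_DkerSum le_rfl) (continuous_DkerSum _)]
      _ ≤ R * ↑(mseq m s * Mgen m s) := by
          rw [Nat.cast_mul]
          nlinarith [mul_nonneg (mul_nonneg (Nat.cast_nonneg (Mgen m s)) (sub_nonneg.2 hm₁))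
            (sub_nonneg.2 hm)]

lemma integral_norm_DkerSum_mul_Mgen_le {q s : ℕ} (hq : q ≤ mseq m s) :
    ∫ x, ‖DkerSum m (q * Mgen m s) x‖ ∂μV m
      ≤ Mgen m s * (q * (q - 1)) + q * (R * Mgen m s) := by
  simp_rw [DkerSum_mul_Mgen hq]
  refine (integral_norm_add_le (integrable_of_continuous (by fun_prop))
    (integrable_of_continuous (by fun_prop))).trans (add_le_add
      (integral_norm_Mgen_mul_geomSum_geomSum_mul_Dker_le s q) ?_)
  refine (integral_norm_mul_le_of_norm_le (integrable_of_continuous (continuous_DkerSum _))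
    (norm_geomSum_rad_le s q)).trans ?_
  gcongr
  exact integral_norm_DkerSum_Mgen_le hR s

lemma integral_norm_DkerSum_le (n : ℕ) : ∫ x, ‖DkerSum m n x‖ ∂μV m ≤ 2 * R * n := by
  induction n using Nat.strong_induction_on with
  | _ n ih =>
    rcases Nat.eq_zero_or_pos n with rfl | hn
    · simp [DkerSum]
    obtain ⟨s, q, r, hq₀, hq, hr, rfl⟩ := exists_eq_mul_Mgen_add (m := m) hn
    simp_rw [DkerSum_mul_Mgen_add hq hr.le]
    have hDker : ∫ x, ‖(r : ℂ) * Dker m (q * Mgen m s) x‖ ∂μV m ≤ r * q := by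
      simp_rw [norm_mul, Complex.norm_natCast]
      rw [integral_const_mul]
      gcongr
      exact integral_norm_Dker_mul_Mgen_le hq.le
    have hhead : ∫ x, ‖DkerSum m (q * Mgen m s) x + r * Dker m (q * Mgen m s) x‖ ∂μV m
        ≤ Mgen m s * (q * (q - 1)) + q * (R * Mgen m s) + r * q :=
      (integral_norm_add_le (integrable_of_continuous (by fun_prop))
        (integrable_of_continuous (by fun_prop))).trans <|
          add_le_add (integral_norm_DkerSum_mul_Mgen_le hR hq.le) hDker
    have htail : ∫ x, ‖rad m s x ^ q * DkerSum m r x‖ ∂μV m ≤ 2 * R * r := by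
      refine (integral_norm_mul_le_of_norm_le (B := 1) (integrable_of_continuous (by fun_prop))
        fun x => by rw [norm_pow, norm_rad, one_pow]).trans ?_
      rw [one_mul]
      exact ih r (by nlinarith [Mgen_pos (m := m) s])
    have hqR : (q : ℝ) + 1 ≤ R := by exact_mod_cast hq.trans_le (hR s)
    have hrM : (r : ℝ) ≤ Mgen m s := by exact_mod_cast hr.le
    calc _ ≤ ((Mgen m s : ℝ) * (q * (q - 1)) + q * (R * Mgen m s) + r * q) + 2 * R * r :=
          (integral_norm_add_le (integrable_of_continuous (by fun_prop))
            (integrable_of_continuous (by fun_prop))).trans (add_le_add hhead htail)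
      _ ≤ 2 * (R : ℝ) * ↑(q * Mgen m s + r) := by
          push_cast
          nlinarith [mul_nonneg (mul_nonneg (Nat.cast_nonneg (Mgen m s)) (Nat.cast_nonneg q))
            (sub_nonneg.2 hqR), mul_le_mul_of_nonneg_right hrM (Nat.cast_nonneg q)]

end FejerKernel

/-- `∫ K_n dμ = 1` and `∫ |K_n| dμ ≤ R⁵` for all `n ≥ 1`. -/
theorem fejer_kernel_integrals (m : ℕ → ℕ) (R : ℕ) (hR : ∀ k, mseq m k ≤ R)
    (n : ℕ) (hn : 1 ≤ n) :
    (∫ x, Kker m n x ∂ μV m) = 1 ∧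
      (∫ x, ‖Kker m n x‖ ∂ μV m) ≤ (R : ℝ) ^ 5 := by
  refine ⟨integral_Kker hn, ?_⟩
  have hR₂ : (2 : ℝ) ≤ R := by exact_mod_cast (Nat.le_add_left 2 (m 0)).trans (hR 0)
  calc ∫ x, ‖Kker m n x‖ ∂μV m = (n : ℝ)⁻¹ * ∫ x, ‖DkerSum m n x‖ ∂μV m := by
        simp_rw [Kker_eq_inv_mul_DkerSum, norm_mul, norm_inv, Complex.norm_natCast]
        exact integral_const_mul _ _
    _ ≤ (n : ℝ)⁻¹ * (2 * R * n) := by gcongr; exact integral_norm_DkerSum_le hR n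
    _ = 2 * R := by field_simp
    _ ≤ R * R := by gcongr
    _ ≤ (R : ℝ) ^ 5 := by
        rw [← sq]; exact pow_le_pow_right₀ (by linarith) (by norm_num)

end VilPaper
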